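/- arXiv:2001.06321 — 2 statements merged into one kernel-verified Lean document; each statement's English description precedes it below -/
import Mathlib

section
/- Let π be a Gaussian prime not dividing 2 and α ∈ ℤ[i] coprime to π. Then there exists a unique k ∈ {0,1,2,3} such that α^((Nπ − 1)/4) ≡ i^k (mod π), where Nπ is the cardinality of ℤ[i]/(π). -/
open Zsqrtd

local notation "ℤ[i]" => GaussianInt

/-- The imaginary unit `i` in `ℤ[i]`. -/
def gi : ℤ[i] := Zsqrtd.sqrtd

/-- `α` is primary if `α ≡ 1 (mod 2(1+i))`. -/
def IsPrimary (α : ℤ[i]) : Prop := 2 * (1 + gi) ∣ α - 1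

/-! The residue field `F = ℤ[i]/(π)` is finite, and since `π ∤ 2` the image of `i` is a primitive
fourth root of unity in it. Hence `4 ∣ |F| - 1`, and by Fermat's little theorem
`β = α ^ ((|F| - 1) / 4)` satisfies `β ^ 4 = 1`, so `β` is exactly one of `1, i, i², i³`. -/

namespace IsPrimitiveRoot

theorem of_sq_eq_neg_one {R : Type*} [CommRing R] {ι : R} (h2 : (2 : R) ≠ 0) (hι : ι ^ 2 = -1) :
    IsPrimitiveRoot ι 4 := by
  have hι_sq_ne_one : ι ^ 2 ≠ 1 := by
    rw [hι]
    intro h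
    exact h2 (by linear_combination -h)
  have hι_pow_four : ι ^ 4 = 1 := by
    rw [show ι ^ 4 = (ι ^ 2) ^ 2 by ring, hι]
    ring
  have hord : orderOf ι = 2 ^ 2 :=
    orderOf_eq_prime_pow (by simpa using hι_sq_ne_one) (by simpa using hι_pow_four)
  simpa [hord] using IsPrimitiveRoot.orderOf ι

theorem existsUnique_fin_pow_eq {R : Type*} [CommRing R] [IsDomain R] {n : ℕ} [NeZero n]
    {ζ ξ : R} (hζ : IsPrimitiveRoot ζ n) (hξ : ξ ^ n = 1) :
    ∃! k : Fin n, ζ ^ (k : ℕ) = ξ := by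
  obtain ⟨i, hi, rfl⟩ := hζ.eq_pow_of_pow_eq_one hξ
  exact ⟨⟨i, hi⟩, rfl, fun k hk => Fin.ext (hζ.pow_inj k.isLt hi hk)⟩

theorem existsUnique_fin_pow_eq_pow_card_sub_one_div {F : Type*} [Field F] [Finite F]
    {n : ℕ} [NeZero n] {ζ β : F} (hζ : IsPrimitiveRoot ζ n) (hβ : β ≠ 0) :
    ∃! k : Fin n, ζ ^ (k : ℕ) = β ^ ((Nat.card F - 1) / n) := by
  cases nonempty_fintype F
  rw [Nat.card_eq_fintype_card]
  have hn : n ∣ Fintype.card F - 1 :=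
    hζ.dvd_of_pow_eq_one _ (FiniteField.pow_card_sub_one_eq_one ζ (hζ.ne_zero (NeZero.ne n)))
  refine hζ.existsUnique_fin_pow_eq ?_
  rw [← pow_mul, Nat.div_mul_cancel hn, FiniteField.pow_card_sub_one_eq_one β hβ]

end IsPrimitiveRoot

namespace Zsqrtd

def linearEquivTuple (d : ℤ) : ℤ√d ≃ₗ[ℤ] (Fin 2 → ℤ) where
  toFun z := ![z.re, z.im]
  invFun f := ⟨f 0, f 1⟩
  map_add' z w := by ext i; fin_cases i <;> simp
  map_smul' n z := by ext i; fin_cases i <;> simp [zsmul_eq_mul]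
  left_inv z := by ext <;> simp
  right_inv f := by ext i; fin_cases i <;> simp

instance (d : ℤ) : Module.Free ℤ (ℤ√d) := .of_equiv (linearEquivTuple d).symm

instance (d : ℤ) : Module.Finite ℤ (ℤ√d) := .equiv (linearEquivTuple d).symm

end Zsqrtd

theorem gi_sq : gi ^ 2 = -1 := by
  simp [gi, sq]

/-- For an odd Gaussian prime `π` and `α` coprime to `π`, there is a unique
`k ∈ {0,1,2,3}` with `α ^ ((Nπ - 1)/4) ≡ i^k (mod π)`, where `Nπ` is the
cardinality of `ℤ[i]/(π)`. -/
theorem quartic_residue_exists_unique (π α : ℤ[i]) (hπ : Prime π)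
    (hodd : ¬ π ∣ 2) (hcop : IsCoprime α π) :
    ∃! k : Fin 4,
      π ∣ α ^ ((Nat.card (ℤ[i] ⧸ Ideal.span {π}) - 1) / 4) - gi ^ (k : ℕ) := by
  set I : Ideal ℤ[i] := Ideal.span {π}
  have : I.IsMaximal := PrincipalIdealRing.isMaximal_of_irreducible hπ.irreducible
  let : Field (ℤ[i] ⧸ I) := Ideal.Quotient.field I
  have : Finite (ℤ[i] ⧸ I) :=
    Ideal.finiteQuotientOfFreeOfNeBot I (by simpa [I] using hπ.ne_zero)
  have h2 : (2 : ℤ[i] ⧸ I) ≠ 0 := fun h =>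
    hodd ((Ideal.Quotient.eq_zero_iff_dvd π 2).mp (by rwa [map_ofNat]))
  have hζ : IsPrimitiveRoot (Ideal.Quotient.mk I gi) 4 :=
    .of_sq_eq_neg_one h2 (by simpa using congrArg (Ideal.Quotient.mk I) gi_sq)
  have hβ : Ideal.Quotient.mk I α ≠ 0 := fun h =>
    hπ.not_isUnit (hcop.isUnit_of_dvd' ((Ideal.Quotient.eq_zero_iff_dvd π α).mp h) dvd_rfl)
  refine (existsUnique_congr fun k => ?_).mpr (hζ.existsUnique_fin_pow_eq_pow_card_sub_one_div hβ)
  rw [eq_comm, ← map_pow, ← map_pow, Ideal.Quotient.eq, Ideal.mem_span_singleton]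
end

section
/- If q is a rational prime congruent to 3 modulo 4 and a is a nonzero integer not divisible by q, then the quartic residue symbol (a/q)₄ in ℤ[i] equals 1. -/
open Zsqrtd

local notation "ℤ[i]" => GaussianInt

open scoped Classical in
/-- The quartic residue symbol `(α/π)₄`: the unique power of `i` congruent to
`α ^ ((Nπ - 1)/4)` modulo `π`, where `Nπ` is the cardinality of `ℤ[i]/(π)`. -/
noncomputable def quartic (α π : ℤ[i]) : ℤ[i] :=
  if h : ∃ k : Fin 4,
      π ∣ α ^ ((Nat.card (ℤ[i] ⧸ Ideal.span {π}) - 1) / 4) - gi ^ (k : ℕ)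
  then gi ^ ((h.choose : Fin 4) : ℕ) else 0

/-!
`ℤ[i]/(q) ≅ (ℤ/q)²` as groups, so the exponent in the symbol is `(q² - 1)/4 = (q - 1)(q + 1)/4`,
a multiple of `q - 1` because `q ≡ 3 (mod 4)`. Fermat's little theorem in `ℤ` then gives
`a ^ ((q² - 1)/4) ≡ 1 (mod q)`, and `1` is the only power of `i` congruent to it, since each
`i ^ k - 1` with `k ≠ 0` divides `2` and the odd prime `q` does not.
-/

namespace Zsqrtd

variable {d : ℤ} (n : ℕ)

def reImModN : ℤ√d →+ ZMod n × ZMod n where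
  toFun x := ((x.re : ZMod n), (x.im : ZMod n))
  map_zero' := by simp
  map_add' x y := by simp

theorem reImModN_surjective [NeZero n] : Function.Surjective (reImModN (d := d) n) := by
  rintro ⟨u, v⟩
  refine ⟨⟨(u.val : ℤ), (v.val : ℤ)⟩, ?_⟩
  simp [reImModN]

theorem ker_reImModN :
    LinearMap.ker (reImModN (d := d) n).toIntLinearMap
      = (Ideal.span {(n : ℤ√d)}).restrictScalars ℤ := by
  ext x
  simp only [LinearMap.mem_ker, AddMonoidHom.coe_toIntLinearMap, Submodule.restrictScalars_mem,
    Ideal.mem_span_singleton, reImModN, AddMonoidHom.coe_mk, ZeroHom.coe_mk, Prod.mk_eq_zero,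
    ZMod.intCast_zmod_eq_zero_iff_dvd]
  simpa using (intCast_dvd (n : ℤ) x).symm

theorem natCard_quotient_span_natCast [NeZero n] :
    Nat.card (ℤ√d ⧸ Ideal.span {(n : ℤ√d)}) = n ^ 2 := by
  have e := (reImModN (d := d) n).toIntLinearMap.quotKerEquivOfSurjective
    (reImModN_surjective n)
  rw [ker_reImModN] at e
  rw [Nat.card_congr ((Submodule.Quotient.restrictScalarsEquiv ℤ _).symm.toEquiv.trans e.toEquiv),
    Nat.card_prod, Nat.card_zmod, sq]

end Zsqrtd

theorem gi_pow_sub_one_dvd_two {k : Fin 4} (hk : k ≠ 0) : gi ^ (k : ℕ) - 1 ∣ 2 := by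
  fin_cases k <;> dsimp only
  · exact absurd rfl hk
  · exact ⟨-1 - gi, by linear_combination gi_sq⟩
  · exact ⟨-1, by linear_combination gi_sq⟩
  · exact ⟨gi - 1, by linear_combination (1 + gi - gi ^ 2) * gi_sq⟩

theorem quartic_eq_one_of_dvd {α π : ℤ[i]}
    (hα : π ∣ α ^ ((Nat.card (ℤ[i] ⧸ Ideal.span {π}) - 1) / 4) - 1) (h2 : ¬ π ∣ 2) :
    quartic α π = 1 := by
  have hex : ∃ k : Fin 4,
      π ∣ α ^ ((Nat.card (ℤ[i] ⧸ Ideal.span {π}) - 1) / 4) - gi ^ (k : ℕ) :=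
    ⟨0, by simpa using hα⟩
  rw [quartic, dif_pos hex]
  by_contra hne
  have hk : hex.choose ≠ 0 := fun h ↦ hne (by rw [h]; rfl)
  have hdvd : π ∣ gi ^ (hex.choose : ℕ) - 1 := by
    simpa using dvd_sub hα hex.choose_spec
  exact h2 (hdvd.trans (gi_pow_sub_one_dvd_two hk))

theorem Nat.sub_one_dvd_sq_sub_one_div_four {q : ℕ} (h3 : q % 4 = 3) :
    q - 1 ∣ (q ^ 2 - 1) / 4 := by
  obtain ⟨t, rfl⟩ : ∃ t, q = 4 * t + 3 := ⟨q / 4, by omega⟩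
  refine ⟨t + 1, ?_⟩
  have : (4 * t + 3) ^ 2 - 1 = 4 * ((4 * t + 2) * (t + 1)) := by ring_nf; omega
  rw [this, Nat.mul_div_cancel_left _ (by norm_num), show 4 * t + 3 - 1 = 4 * t + 2 by omega]

theorem quartic_rat_prime_general (q : ℕ) (hq : q.Prime) (h3 : q % 4 = 3)
    (a : ℤ) (hqa : ¬ (q : ℤ) ∣ a) :
    quartic ((a : ℤ) : ℤ[i]) ((q : ℕ) : ℤ[i]) = 1 := by
  have : NeZero q := ⟨hq.ne_zero⟩
  have hcop : IsCoprime a q := ((Nat.prime_iff_prime_int.mp hq).coprime_iff_not_dvd.mpr hqa).symm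
  obtain ⟨c, hc⟩ := Nat.sub_one_dvd_sq_sub_one_div_four h3
  have hfermat : (q : ℤ) ∣ a ^ ((q ^ 2 - 1) / 4) - 1 := by
    rw [hc, pow_mul]
    exact (Int.prime_dvd_pow_sub_one hq hcop).trans (sub_one_dvd_pow_sub_one _ c)
  apply quartic_eq_one_of_dvd
  · rw [natCard_quotient_span_natCast]
    exact_mod_cast (intCast_dvd_intCast (d := -1) _ _).mpr hfermat
  · rw [← Int.cast_natCast, show (2 : ℤ[i]) = ((2 : ℤ) : ℤ[i]) by norm_num, intCast_dvd_intCast]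
    exact fun h ↦ by have := Int.le_of_dvd two_pos h; omega

/-- For a rational prime `q ≡ 3 (mod 4)` and a nonzero integer `a` not
divisible by `q`, the quartic residue symbol `(a/q)₄ = 1`. -/
theorem quartic_rat_prime (q : ℕ) (hq : q.Prime) (h3 : q % 4 = 3)
    (a : ℤ) (ha : a ≠ 0) (hqa : ¬ (q : ℤ) ∣ a) :
    quartic ((a : ℤ) : ℤ[i]) ((q : ℕ) : ℤ[i]) = 1 :=
  quartic_rat_prime_general q hq h3 a hqa
end
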